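/- Exact full-data remainder (double-robustness identity) for the ATE: assume g₀∘W is a version of μ[A | σ(W)], Q₀(A,W) is a version of μ[Y | σ(A,W)], and 0 < g_P(w) < 1 for all w. Then, provided all displayed integrands are integrable, ∫ [ H_{g_P}(A,W)·(Y − Q_P(A,W)) + Q_P(1,W) − Q_P(0,W) ] dμ − ∫ [ Q₀(1,W) − Q₀(0,W) ] dμ = ∫ [ ((g_P − g₀)/g_P)(W)·(Q_P − Q₀)(1,W) + ((g_P − g₀)/(1 − g_P))(W)·(Q_P − Q₀)(0,W) ] dμ. (Writing g_P(1|w) = g_P(w) and g_P(0|w) = 1 − g_P(w), the right-hand side equals the paper's form ∫ ((g_P − g₀)/g_P)(1|W)(Q_P − Q₀)(1,W) − ((g_P − g₀)/g_P)(0|W)(Q_P − Q₀)(0,W) dμ.) -/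

import Mathlib

/-!
Conditioning on `σ(A, W)` replaces `Y` by `Q₀(A, W)` in the weighted residual, because the clever
covariate `H_{g_P}(A, W)` is `σ(A, W)`-measurable. Since `A ∈ {0, 1}`, the resulting integrand
splits as `φ₁(W) A − φ₀(W) (1 − A)`, and conditioning on `σ(W)` replaces `A` by `g₀(W)`. What is
left is a pointwise algebraic identity in `g_P, g₀, Q_P, Q₀`.
-/

open MeasureTheory

/-- The ATE clever covariate `H_g(a,w) = a/g(w) − (1−a)/(1−g(w))`. -/
noncomputable def Hg {𝒲 : Type*} (g : 𝒲 → ℝ) (a : ℝ) (w : 𝒲) : ℝ :=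
  a / g w - (1 - a) / (1 - g w)

section PullOut

variable {Ω : Type*} {m mΩ : MeasurableSpace Ω} {μ : Measure Ω} {f g h : Ω → ℝ}

theorem ae_eq_condExp_mul_of_ae_eq_condExp (hf : StronglyMeasurable[m] f)
    (hfg : Integrable (f * g) μ) (hg : Integrable g μ) (hh : h =ᵐ[μ] μ[g | m]) :
    f * h =ᵐ[μ] μ[f * g | m] := by
  filter_upwards [condExp_mul_of_stronglyMeasurable_left hf hfg hg, hh] with ω hfg' hh'
  rw [hfg', Pi.mul_apply, Pi.mul_apply, hh']

theorem integrable_mul_of_ae_eq_condExp (hf : StronglyMeasurable[m] f)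
    (hfg : Integrable (fun ω => f ω * g ω) μ) (hg : Integrable g μ) (hh : h =ᵐ[μ] μ[g | m]) :
    Integrable (fun ω => f ω * h ω) μ :=
  integrable_condExp.congr (ae_eq_condExp_mul_of_ae_eq_condExp hf hfg hg hh).symm

theorem integral_mul_eq_of_ae_eq_condExp (hm : m ≤ mΩ) [SigmaFinite (μ.trim hm)]
    (hf : StronglyMeasurable[m] f) (hfg : Integrable (fun ω => f ω * g ω) μ)
    (hg : Integrable g μ) (hh : h =ᵐ[μ] μ[g | m]) :
    ∫ ω, f ω * h ω ∂μ = ∫ ω, f ω * g ω ∂μ :=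
  (integral_congr_ae (ae_eq_condExp_mul_of_ae_eq_condExp hf hfg hg hh)).trans
    (integral_condExp hm)

end PullOut

theorem condExp_one_sub_ae_eq {Ω : Type*} {m mΩ : MeasurableSpace Ω} {μ : Measure Ω}
    [IsFiniteMeasure μ] (hm : m ≤ mΩ) {A : Ω → ℝ} (hA : Integrable A μ) :
    μ[fun ω => 1 - A ω | m] =ᵐ[μ] fun ω => 1 - μ[A | m] ω := by
  filter_upwards [condExp_sub (integrable_const 1) hA m] with ω hω
  rw [show (fun ω => 1 - A ω) = (fun _ => (1 : ℝ)) - A from rfl, hω, Pi.sub_apply,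
    condExp_const hm]

theorem integrable_mul_and_mul_one_sub_of_zero_one {Ω : Type*} {mΩ : MeasurableSpace Ω} {μ : Measure Ω}
    {A : Ω → ℝ} (hA : Measurable A) (hA01 : ∀ ω, A ω = 0 ∨ A ω = 1) {c d : Ω → ℝ}
    (hcd : Integrable (fun ω => c ω * A ω - d ω * (1 - A ω)) μ) :
    Integrable (fun ω => c ω * A ω) μ ∧ Integrable (fun ω => d ω * (1 - A ω)) μ := by
  have hbdd : ∀ᵐ ω ∂μ, ‖A ω‖ ≤ 1 :=
    ae_of_all _ fun ω => by rcases hA01 ω with h | h <;> simp [h]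
  have hbdd' : ∀ᵐ ω ∂μ, ‖1 - A ω‖ ≤ 1 :=
    ae_of_all _ fun ω => by rcases hA01 ω with h | h <;> simp [h]
  constructor
  · refine (hcd.mul_bdd hA.aestronglyMeasurable hbdd).congr (ae_of_all _ fun ω => ?_)
    rcases hA01 ω with h | h <;> simp [h]
  · refine (hcd.mul_bdd (measurable_const.sub hA).aestronglyMeasurable hbdd').neg.congr
      (ae_of_all _ fun ω => ?_)
    rcases hA01 ω with h | h <;> simp [h]

section CleverCovariate

variable {𝒲 : Type*} {g : 𝒲 → ℝ} {a : ℝ} {w : 𝒲}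

theorem Hg_mul_eq (F : ℝ → 𝒲 → ℝ) (ha : a = 0 ∨ a = 1) :
    Hg g a w * F a w = F 1 w / g w * a - F 0 w / (1 - g w) * (1 - a) := by
  rcases ha with rfl | rfl <;> simp [Hg] <;> ring

theorem one_le_abs_Hg (hg : 0 < g w ∧ g w < 1) (ha : a = 0 ∨ a = 1) : 1 ≤ |Hg g a w| := by
  rcases ha with rfl | rfl
  · simp only [Hg, zero_div, sub_zero, zero_sub, one_div, abs_neg]
    rw [abs_of_pos (inv_pos.2 (sub_pos.2 hg.2))]
    exact one_le_inv₀ (sub_pos.2 hg.2) |>.2 (by linarith)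
  · simp only [Hg, sub_self, zero_div, sub_zero, one_div]
    rw [abs_of_pos (inv_pos.2 hg.1)]
    exact one_le_inv₀ hg.1 |>.2 hg.2.le

theorem measurable_uncurry_Hg [MeasurableSpace 𝒲] (hg : Measurable g) :
    Measurable (Function.uncurry (Hg g)) :=
  (measurable_fst.div (hg.comp measurable_snd)).sub
    ((measurable_const.sub measurable_fst).div (measurable_const.sub (hg.comp measurable_snd)))

end CleverCovariate

theorem integral_Hg_mul_eq {Ω 𝒲 : Type*} {mΩ : MeasurableSpace Ω} [MeasurableSpace 𝒲]
    {μ : Measure Ω} [IsFiniteMeasure μ] {W : Ω → 𝒲} (hW : Measurable W) {A : Ω → ℝ}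
    (hA : Measurable A) (hA01 : ∀ ω, A ω = 0 ∨ A ω = 1) {g g₀ : 𝒲 → ℝ} (hg : Measurable g)
    (hg₀ : (fun ω => g₀ (W ω)) =ᵐ[μ] μ[A | MeasurableSpace.comap W inferInstance])
    {F : ℝ → 𝒲 → ℝ} (hF₁ : Measurable (F 1)) (hF₀ : Measurable (F 0))
    (hint : Integrable (fun ω => Hg g (A ω) (W ω) * F (A ω) (W ω)) μ) :
    Integrable (fun ω => F 1 (W ω) / g (W ω) * g₀ (W ω)
        - F 0 (W ω) / (1 - g (W ω)) * (1 - g₀ (W ω))) μ ∧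
      ∫ ω, Hg g (A ω) (W ω) * F (A ω) (W ω) ∂μ
        = ∫ ω, (F 1 (W ω) / g (W ω) * g₀ (W ω)
          - F 0 (W ω) / (1 - g (W ω)) * (1 - g₀ (W ω))) ∂μ := by
  have hsplit : (fun ω => Hg g (A ω) (W ω) * F (A ω) (W ω))
      = fun ω => F 1 (W ω) / g (W ω) * A ω - F 0 (W ω) / (1 - g (W ω)) * (1 - A ω) :=
    funext fun ω => Hg_mul_eq F (hA01 ω)
  rw [hsplit] at hint ⊢
  obtain ⟨hint₁, hint₀⟩ := integrable_mul_and_mul_one_sub_of_zero_one hA hA01 hint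
  have hAint : Integrable A μ :=
    (integrable_const 1).mono' hA.aestronglyMeasurable
      (ae_of_all _ fun ω => by rcases hA01 ω with h | h <;> simp [h])
  have hm : MeasurableSpace.comap W inferInstance ≤ mΩ := hW.comap_le
  have hWm : Measurable[MeasurableSpace.comap W inferInstance] W := comap_measurable W
  have hφ₁ : StronglyMeasurable[MeasurableSpace.comap W inferInstance]
      (fun ω => F 1 (W ω) / g (W ω)) := ((hF₁.div hg).comp hWm).stronglyMeasurable
  have hφ₀ : StronglyMeasurable[MeasurableSpace.comap W inferInstance]
      (fun ω => F 0 (W ω) / (1 - g (W ω))) :=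
    ((hF₀.div (measurable_const.sub hg)).comp hWm).stronglyMeasurable
  have hg₀' : (fun ω => 1 - g₀ (W ω))
      =ᵐ[μ] μ[fun ω => 1 - A ω | MeasurableSpace.comap W inferInstance] := by
    filter_upwards [hg₀, condExp_one_sub_ae_eq hm hAint] with ω h h'
    rw [h', h]
  have hBint : Integrable (fun ω => 1 - A ω) μ := (integrable_const 1).sub hAint
  have hR₁ := integrable_mul_of_ae_eq_condExp hφ₁ hint₁ hAint hg₀
  have hR₀ := integrable_mul_of_ae_eq_condExp hφ₀ hint₀ hBint hg₀'
  refine ⟨hR₁.sub hR₀, ?_⟩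
  rw [integral_sub hint₁ hint₀, integral_sub hR₁ hR₀,
    integral_mul_eq_of_ae_eq_condExp hm hφ₁ hint₁ hAint hg₀,
    integral_mul_eq_of_ae_eq_condExp hm hφ₀ hint₀ hBint hg₀']

theorem integral_comp_mul_sub_eq_of_ae_eq_condExp {Ω β : Type*} {mΩ : MeasurableSpace Ω} [MeasurableSpace β]
    {μ : Measure Ω} [IsFiniteMeasure μ] {X : Ω → β} (hX : Measurable X) {Y : Ω → ℝ}
    (hY : Integrable Y μ) {φ ψ q : β → ℝ} (hφ : Measurable φ) (hψ : Measurable ψ)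
    (hq : (fun ω => q (X ω)) =ᵐ[μ] μ[Y | MeasurableSpace.comap X inferInstance])
    (hint : Integrable (fun ω => φ (X ω) * (Y ω - ψ (X ω))) μ)
    (hres : Integrable (fun ω => Y ω - ψ (X ω)) μ) :
    Integrable (fun ω => φ (X ω) * (q (X ω) - ψ (X ω))) μ ∧
      ∫ ω, φ (X ω) * (Y ω - ψ (X ω)) ∂μ = ∫ ω, φ (X ω) * (q (X ω) - ψ (X ω)) ∂μ := by
  have hm : MeasurableSpace.comap X inferInstance ≤ mΩ := hX.comap_le
  have hXm : Measurable[MeasurableSpace.comap X inferInstance] X := comap_measurable X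
  have hψX : Integrable (fun ω => ψ (X ω)) μ :=
    (hY.sub hres).congr (ae_of_all _ fun ω => sub_sub_cancel (Y ω) _)
  have hcond : (fun ω => q (X ω) - ψ (X ω))
      =ᵐ[μ] μ[fun ω => Y ω - ψ (X ω) | MeasurableSpace.comap X inferInstance] := by
    filter_upwards [hq, condExp_sub hY hψX (MeasurableSpace.comap X inferInstance)] with ω hq' h
    rw [show (fun ω => Y ω - ψ (X ω)) = Y - fun ω => ψ (X ω) from rfl, h, Pi.sub_apply, hq',
      condExp_of_stronglyMeasurable (f := fun ω => ψ (X ω)) hm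
        (hψ.comp hXm).stronglyMeasurable hψX]
  have hφX := (hφ.comp hXm).stronglyMeasurable
  exact ⟨integrable_mul_of_ae_eq_condExp hφX hint hres hcond,
    (integral_mul_eq_of_ae_eq_condExp hm hφX hint hres hcond).symm⟩

theorem exact_fulldata_remainder_ATE_general {Ω 𝒲 : Type*}
    {mΩ : MeasurableSpace Ω} [MeasurableSpace 𝒲]
    (μ : Measure Ω) [IsProbabilityMeasure μ]
    (W : Ω → 𝒲) (hW : Measurable W)
    (A : Ω → ℝ) (hA : Measurable A) (hA01 : ∀ ω, A ω = 0 ∨ A ω = 1)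
    (Y : Ω → ℝ) (hY : Integrable Y μ)
    (gP g₀ : 𝒲 → ℝ) (hgP : Measurable gP)
    (QP Q₀ : ℝ → 𝒲 → ℝ)
    (hQP : Measurable (Function.uncurry QP)) (hQ₀ : Measurable (Function.uncurry Q₀))
    (hg₀ver : (fun ω => g₀ (W ω)) =ᵐ[μ] μ[A | MeasurableSpace.comap W inferInstance])
    (hQ₀ver : (fun ω => Q₀ (A ω) (W ω))
      =ᵐ[μ] μ[Y | MeasurableSpace.comap (fun ω => (A ω, W ω)) inferInstance])
    (hgPbd : ∀ w, 0 < gP w ∧ gP w < 1)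
    (hint1 : Integrable (fun ω => Hg gP (A ω) (W ω) * (Y ω - QP (A ω) (W ω))) μ)
    (hint2 : Integrable (fun ω => QP 1 (W ω) - QP 0 (W ω)) μ)
    (hint3 : Integrable (fun ω => Q₀ 1 (W ω) - Q₀ 0 (W ω)) μ) :
    (∫ ω, (Hg gP (A ω) (W ω) * (Y ω - QP (A ω) (W ω)) + QP 1 (W ω) - QP 0 (W ω)) ∂μ)
      - ∫ ω, (Q₀ 1 (W ω) - Q₀ 0 (W ω)) ∂μ
    = ∫ ω, (((gP (W ω) - g₀ (W ω)) / gP (W ω)) * (QP 1 (W ω) - Q₀ 1 (W ω))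
        + ((gP (W ω) - g₀ (W ω)) / (1 - gP (W ω))) * (QP 0 (W ω) - Q₀ 0 (W ω))) ∂μ := by
  have hAW : Measurable (fun ω => (A ω, W ω)) := hA.prodMk hW
  have hresid : Integrable (fun ω => Y ω - QP (A ω) (W ω)) μ :=
    hint1.mono (hY.aestronglyMeasurable.sub (hQP.comp hAW).aestronglyMeasurable) <|
      ae_of_all _ fun ω => by
        rw [norm_mul]
        exact le_mul_of_one_le_left (norm_nonneg _) (one_le_abs_Hg (hgPbd _) (hA01 ω))
  obtain ⟨hT, hYT⟩ := integral_comp_mul_sub_eq_of_ae_eq_condExp (φ := Function.uncurry (Hg gP))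
    (ψ := Function.uncurry QP) (q := Function.uncurry Q₀)
    hAW hY (measurable_uncurry_Hg hgP) hQP hQ₀ver hint1 hresid
  obtain ⟨hR, hTR⟩ := integral_Hg_mul_eq (F := fun a w => Q₀ a w - QP a w) hW hA hA01 hgP
    hg₀ver (hQ₀.of_uncurry_left.sub hQP.of_uncurry_left)
    (hQ₀.of_uncurry_left.sub hQP.of_uncurry_left) hT
  simp only [Function.uncurry_apply_pair] at hT hYT
  calc _ = (∫ ω, Hg gP (A ω) (W ω) * (Y ω - QP (A ω) (W ω)) ∂μ
          + ∫ ω, (QP 1 (W ω) - QP 0 (W ω)) ∂μ) - ∫ ω, (Q₀ 1 (W ω) - Q₀ 0 (W ω)) ∂μ := by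
        rw [← integral_add hint1 hint2]
        simp only [add_sub_assoc]
    _ = ∫ ω, ((Q₀ 1 (W ω) - QP 1 (W ω)) / gP (W ω) * g₀ (W ω)
          - (Q₀ 0 (W ω) - QP 0 (W ω)) / (1 - gP (W ω)) * (1 - g₀ (W ω))
          + (QP 1 (W ω) - QP 0 (W ω)) - (Q₀ 1 (W ω) - Q₀ 0 (W ω))) ∂μ := by
        rw [hYT, hTR, ← integral_add hR hint2]
        exact (integral_sub (hR.add hint2) hint3).symm
    _ = _ := integral_congr_ae <| ae_of_all _ fun ω => by
        have := (hgPbd (W ω)).1.ne'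
        have := (sub_pos.2 (hgPbd (W ω)).2).ne'
        field_simp
        ring

/-- Exact full-data remainder (double-robustness identity) for the ATE:
`∫ [H_{g_P}(A,W)(Y − Q_P(A,W)) + Q_P(1,W) − Q_P(0,W)] dμ − ∫ [Q₀(1,W) − Q₀(0,W)] dμ
 = ∫ [((g_P − g₀)/g_P)(W)(Q_P − Q₀)(1,W) + ((g_P − g₀)/(1 − g_P))(W)(Q_P − Q₀)(0,W)] dμ`. -/
theorem exact_fulldata_remainder_ATE {Ω 𝒲 : Type*}
    {mΩ : MeasurableSpace Ω} [MeasurableSpace 𝒲]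
    (μ : Measure Ω) [IsProbabilityMeasure μ]
    (W : Ω → 𝒲) (hW : Measurable W)
    (A : Ω → ℝ) (hA : Measurable A) (hA01 : ∀ ω, A ω = 0 ∨ A ω = 1)
    (Y : Ω → ℝ) (hY : Integrable Y μ)
    (gP g₀ : 𝒲 → ℝ) (hgP : Measurable gP) (hg₀ : Measurable g₀)
    (QP Q₀ : ℝ → 𝒲 → ℝ)
    (hQP : Measurable (Function.uncurry QP)) (hQ₀ : Measurable (Function.uncurry Q₀))
    (hg₀ver : (fun ω => g₀ (W ω)) =ᵐ[μ] μ[A | MeasurableSpace.comap W inferInstance])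
    (hQ₀ver : (fun ω => Q₀ (A ω) (W ω))
      =ᵐ[μ] μ[Y | MeasurableSpace.comap (fun ω => (A ω, W ω)) inferInstance])
    (hgPbd : ∀ w, 0 < gP w ∧ gP w < 1)
    (hint1 : Integrable (fun ω => Hg gP (A ω) (W ω) * (Y ω - QP (A ω) (W ω))) μ)
    (hint2 : Integrable (fun ω => QP 1 (W ω) - QP 0 (W ω)) μ)
    (hint3 : Integrable (fun ω => Q₀ 1 (W ω) - Q₀ 0 (W ω)) μ)
    (hint4 : Integrable
      (fun ω => ((gP (W ω) - g₀ (W ω)) / gP (W ω)) * (QP 1 (W ω) - Q₀ 1 (W ω))) μ)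
    (hint5 : Integrable
      (fun ω => ((gP (W ω) - g₀ (W ω)) / (1 - gP (W ω))) * (QP 0 (W ω) - Q₀ 0 (W ω))) μ) :
    (∫ ω, (Hg gP (A ω) (W ω) * (Y ω - QP (A ω) (W ω)) + QP 1 (W ω) - QP 0 (W ω)) ∂μ)
      - ∫ ω, (Q₀ 1 (W ω) - Q₀ 0 (W ω)) ∂μ
    = ∫ ω, (((gP (W ω) - g₀ (W ω)) / gP (W ω)) * (QP 1 (W ω) - Q₀ 1 (W ω))
        + ((gP (W ω) - g₀ (W ω)) / (1 - gP (W ω))) * (QP 0 (W ω) - Q₀ 0 (W ω))) ∂μ :=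
  exact_fulldata_remainder_ATE_general (mΩ := mΩ) μ W hW A hA hA01 Y hY gP g₀ hgP QP Q₀ hQP hQ₀
    hg₀ver hQ₀ver hgPbd hint1 hint2 hint3
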